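/- arXiv:2402.08770 — 3 statements merged into one kernel-verified Lean document; each statement's English description precedes it below -/
import Mathlib

section
/- Let S and T be bilateral weighted shifts with positive quasi-invertible uniformly bounded weights (S_i), (T_i). If U = [U_{i,j}] ∈ B(ℓ²(ℤ, H)) is a unitary operator such that US = TU, then U is constant on diagonals: U_{i+1,j+1} = U_{i,j} for all i, j ∈ ℤ. -/
open scoped InnerProductSpace ComplexOrder

/-!
Write `A = U_{i,j}`, `B = U_{i+1,j+1}`, `s = S_{j+1}` and `t = T_{i+1}`. Comparing matrix entries
in `US = TU` and in `US* = T*U` (which follows since `U` is unitary) gives `Bs = tA` and `As = tB`,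
so `C = A - B` satisfies `Cs = -tC`. Then `C*C s = -C*tC` is self-adjoint, so the positive
operators `C*C` and `s` commute and their product is positive. Thus `C*tC` is both `≥ 0` and
`≤ 0`, hence zero, and strict positivity of `t` forces `C = 0`.
-/

section CStarAlgebra

variable {A : Type*} [CStarAlgebra A] [PartialOrder A] [StarOrderedRing A]

theorem star_mul_mul_eq_zero_of_mul_eq_neg_mul {s t c : A} (hs : 0 ≤ s) (ht : 0 ≤ t)
    (h : c * s = -(t * c)) : star c * t * c = 0 := by
  have hconj : 0 ≤ star c * t * c := star_left_conjugate_nonneg ht c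
  have hprod : star c * c * s = -(star c * t * c) := by rw [mul_assoc, h, mul_neg, mul_assoc]
  have hcomm : Commute (star c * c) s :=
    (IsSelfAdjoint.star_mul_self c).commute_iff hs.isSelfAdjoint |>.mpr
      (hprod ▸ hconj.isSelfAdjoint.neg)
  have hneg := hcomm.mul_nonneg (star_mul_self_nonneg c) hs
  rw [hprod, neg_nonneg] at hneg
  exact le_antisymm hneg hconj

end CStarAlgebra

lemma mul_star_eq_star_mul_of_mul_eq_mul {R : Type*} [Monoid R] [StarMul R] {u s t : R}
    (hu₁ : star u * u = 1) (hu₂ : u * star u = 1) (h : u * s = t * u) :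
    u * star s = star t * u := by
  have hs : s * star u = star u * t := by
    calc s * star u = star u * (u * s) * star u := by rw [← mul_assoc, hu₁, one_mul]
      _ = star u * t := by rw [h, mul_assoc, mul_assoc, hu₂, mul_one]
  simpa using congrArg star hs

namespace ContinuousLinearMap

variable {H : Type*} [NormedAddCommGroup H] [InnerProductSpace ℂ H]

lemma nonneg_of_inner_nonneg {w : H →L[ℂ] H} (hw : ∀ h, 0 ≤ ⟪w h, h⟫_ℂ) : 0 ≤ w := by
  refine (nonneg_iff_isPositive w).mpr ((isPositive_iff w).mpr ⟨?_, hw⟩)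
  exact LinearMap.isSymmetric_iff_inner_map_self_real _ |>.mpr fun h =>
    Complex.conj_eq_iff_im.mpr (Complex.nonneg_iff.mp (hw h)).2.symm

lemma nonneg_of_inner_pos {w : H →L[ℂ] H} (hw : ∀ h, h ≠ 0 → 0 < ⟪w h, h⟫_ℂ) : 0 ≤ w :=
  nonneg_of_inner_nonneg fun h => by
    rcases eq_or_ne h 0 with rfl | hh
    · simp
    · exact (hw h hh).le

variable [CompleteSpace H]

lemma eq_zero_of_star_mul_mul_eq_zero {t c : H →L[ℂ] H} (ht : ∀ h, h ≠ 0 → 0 < ⟪t h, h⟫_ℂ)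
    (h : star c * t * c = 0) : c = 0 := by
  ext x
  by_contra hx
  have hinner : ⟪t (c x), c x⟫_ℂ = ⟪(star c * t * c) x, x⟫_ℂ :=
    (adjoint_inner_left c x (t (c x))).symm
  have hpos := ht (c x) hx
  rw [hinner, h] at hpos
  simp at hpos

theorem eq_of_mul_eq_mul_swap {s t a b : H →L[ℂ] H} (hs : 0 ≤ s)
    (ht : ∀ h, h ≠ 0 → 0 < ⟪t h, h⟫_ℂ) (hab : a * s = t * b) (hba : b * s = t * a) : a = b :=
  sub_eq_zero.mp <| eq_zero_of_star_mul_mul_eq_zero ht <|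
    star_mul_mul_eq_zero_of_mul_eq_neg_mul hs (nonneg_of_inner_pos ht)
      (by rw [sub_mul, mul_sub, hab, hba, neg_sub])

end ContinuousLinearMap

namespace WeightedShift

variable {𝕜 : Type*} [RCLike 𝕜] {H : Type*} [NormedAddCommGroup H] [InnerProductSpace 𝕜 H]

variable {S : lp (fun _ : ℤ => H) 2 →L[𝕜] lp (fun _ : ℤ => H) 2} {w : ℤ → H →L[𝕜] H}

local notation "ℓ²" => lp (fun _ : ℤ => H) 2

noncomputable def matrixEntry (U : ℓ² →L[𝕜] ℓ²) (i j : ℤ) : H →L[𝕜] H :=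
  (lp.evalCLM 𝕜 _ 2 i).comp (U.comp (lp.singleContinuousLinearMap 𝕜 _ 2 j))

lemma matrixEntry_apply (U : ℓ² →L[𝕜] ℓ²) (i j : ℤ) (x : H) :
    matrixEntry U i j x = U (lp.single 2 j x) i := rfl

lemma apply_single (hS : ∀ x i, S x i = w i (x (i - 1))) (k : ℤ) (v : H) :
    S (lp.single 2 k v) = lp.single 2 (k + 1) (w (k + 1) v) := by
  refine lp.ext (funext fun m => ?_)
  rw [hS]
  rcases eq_or_ne m (k + 1) with rfl | hm
  · rw [add_sub_cancel_right, lp.single_apply_self, lp.single_apply_self]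
  · rw [lp.single_apply_ne _ _ _ (by omega), lp.single_apply_ne _ _ _ hm, map_zero]

lemma adjoint_apply [CompleteSpace H] (hS : ∀ x i, S x i = w i (x (i - 1)))
    (hw : ∀ i, IsSelfAdjoint (w i)) (y : ℓ²) (m : ℤ) :
    (S.adjoint y) m = w (m + 1) (y (m + 1)) := by
  refine ext_inner_left 𝕜 fun h => ?_
  calc ⟪h, (S.adjoint y) m⟫_𝕜 = ⟪S (lp.single 2 m h), y⟫_𝕜 :=
        (lp.inner_single_left m h _).symm.trans (S.adjoint_inner_right _ _)
    _ = ⟪w (m + 1) h, y (m + 1)⟫_𝕜 := by rw [apply_single hS, lp.inner_single_left]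
    _ = ⟪h, w (m + 1) (y (m + 1))⟫_𝕜 := (hw (m + 1)).isSymmetric h _

lemma adjoint_single [CompleteSpace H] (hS : ∀ x i, S x i = w i (x (i - 1)))
    (hw : ∀ i, IsSelfAdjoint (w i)) (k : ℤ) (v : H) :
    S.adjoint (lp.single 2 k v) = lp.single 2 (k - 1) (w k v) := by
  refine lp.ext (funext fun m => ?_)
  rw [adjoint_apply hS hw]
  rcases eq_or_ne m (k - 1) with rfl | hm
  · rw [sub_add_cancel, lp.single_apply_self, lp.single_apply_self]
  · rw [lp.single_apply_ne _ _ _ (by omega), lp.single_apply_ne _ _ _ hm, map_zero]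

lemma matrixEntry_mul_shift (hS : ∀ x i, S x i = w i (x (i - 1))) (U : ℓ² →L[𝕜] ℓ²) (i j : ℤ) :
    matrixEntry (U * S) i j = matrixEntry U i (j + 1) * w (j + 1) := by
  ext v
  simp only [matrixEntry_apply, mul_apply_eq_comp, apply_single hS]

lemma matrixEntry_shift_mul (hS : ∀ x i, S x i = w i (x (i - 1))) (U : ℓ² →L[𝕜] ℓ²) (i j : ℤ) :
    matrixEntry (S * U) (i + 1) j = w (i + 1) * matrixEntry U i j := by
  ext v
  simp only [matrixEntry_apply, mul_apply_eq_comp, hS, add_sub_cancel_right]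

lemma matrixEntry_mul_adjoint [CompleteSpace H] (hS : ∀ x i, S x i = w i (x (i - 1)))
    (hw : ∀ i, IsSelfAdjoint (w i)) (U : ℓ² →L[𝕜] ℓ²) (i j : ℤ) :
    matrixEntry (U * S.adjoint) i (j + 1) = matrixEntry U i j * w (j + 1) := by
  ext v
  simp only [matrixEntry_apply, mul_apply_eq_comp, adjoint_single hS hw,
    add_sub_cancel_right]

lemma matrixEntry_adjoint_mul [CompleteSpace H] (hS : ∀ x i, S x i = w i (x (i - 1)))
    (hw : ∀ i, IsSelfAdjoint (w i)) (U : ℓ² →L[𝕜] ℓ²) (i j : ℤ) :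
    matrixEntry (S.adjoint * U) i j = w (i + 1) * matrixEntry U (i + 1) j := by
  ext v
  simp only [matrixEntry_apply, mul_apply_eq_comp, adjoint_apply hS hw]

end WeightedShift

open WeightedShift in
theorem unitary_intertwiner_constant_on_diagonals_general {H : Type*} [NormedAddCommGroup H]
    [InnerProductSpace ℂ H] [CompleteSpace H]
    (sw tw : ℤ → H →L[ℂ] H)
    (hspos : ∀ (i : ℤ) (h : H), h ≠ 0 → 0 < ⟪sw i h, h⟫_ℂ)
    (htpos : ∀ (i : ℤ) (h : H), h ≠ 0 → 0 < ⟪tw i h, h⟫_ℂ)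
    (S T U : lp (fun _ : ℤ => H) 2 →L[ℂ] lp (fun _ : ℤ => H) 2)
    (hS : ∀ (x : lp (fun _ : ℤ => H) 2) (i : ℤ), S x i = sw i (x (i - 1)))
    (hT : ∀ (x : lp (fun _ : ℤ => H) 2) (i : ℤ), T x i = tw i (x (i - 1)))
    (hU : ContinuousLinearMap.adjoint U * U = 1 ∧ U * ContinuousLinearMap.adjoint U = 1)
    (hUS : U * S = T * U) :
    ∀ (i j : ℤ) (x : H),
      (U (lp.single 2 (j + 1) x)) (i + 1) = (U (lp.single 2 j x)) i := by
  intro i j x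
  have hs := fun k => ContinuousLinearMap.nonneg_of_inner_pos (hspos k)
  have ht := fun k => ContinuousLinearMap.nonneg_of_inner_pos (htpos k)
  have hUS' : U * S.adjoint = T.adjoint * U := mul_star_eq_star_mul_of_mul_eq_mul hU.1 hU.2 hUS
  have hB : matrixEntry U (i + 1) (j + 1) * sw (j + 1) = tw (i + 1) * matrixEntry U i j := by
    rw [← matrixEntry_mul_shift hS, hUS, matrixEntry_shift_mul hT]
  have hA : matrixEntry U i j * sw (j + 1) = tw (i + 1) * matrixEntry U (i + 1) (j + 1) := by
    rw [← matrixEntry_mul_adjoint hS (fun k => (hs k).isSelfAdjoint), hUS',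
      matrixEntry_adjoint_mul hT (fun k => (ht k).isSelfAdjoint)]
  exact congr($(ContinuousLinearMap.eq_of_mul_eq_mul_swap (hs _) (htpos _) hB hA) x)

/-- If `S`, `T` are bilateral weighted shifts with (strictly) positive uniformly
bounded weights and `U` is a unitary with `US = TU`, then `U` is constant on
diagonals: its matrix entries satisfy `U_{i+1,j+1} = U_{i,j}` for all `i, j`. -/
theorem unitary_intertwiner_constant_on_diagonals {H : Type*} [NormedAddCommGroup H]
    [InnerProductSpace ℂ H] [CompleteSpace H]
    (sw tw : ℤ → H →L[ℂ] H)
    (hsbdd : ∃ C : ℝ, ∀ i : ℤ, ‖sw i‖ ≤ C) (htbdd : ∃ C : ℝ, ∀ i : ℤ, ‖tw i‖ ≤ C)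
    (hspos : ∀ (i : ℤ) (h : H), h ≠ 0 → 0 < ⟪sw i h, h⟫_ℂ)
    (htpos : ∀ (i : ℤ) (h : H), h ≠ 0 → 0 < ⟪tw i h, h⟫_ℂ)
    (S T U : lp (fun _ : ℤ => H) 2 →L[ℂ] lp (fun _ : ℤ => H) 2)
    (hS : ∀ (x : lp (fun _ : ℤ => H) 2) (i : ℤ), S x i = sw i (x (i - 1)))
    (hT : ∀ (x : lp (fun _ : ℤ => H) 2) (i : ℤ), T x i = tw i (x (i - 1)))
    (hU : ContinuousLinearMap.adjoint U * U = 1 ∧ U * ContinuousLinearMap.adjoint U = 1)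
    (hUS : U * S = T * U) :
    ∀ (i j : ℤ) (x : H),
      (U (lp.single 2 (j + 1) x)) (i + 1) = (U (lp.single 2 j x)) i :=
  unitary_intertwiner_constant_on_diagonals_general sw tw hspos htpos S T U hS hT hU hUS
end

section
/- Let S, T be bilateral weighted shifts on ℓ²(ℤ, H) with quasi-invertible uniformly bounded weights. If there is a unitary U of diagonal form (i.e., for some p ∈ ℤ, the only nonzero matrix entries of U are U_{i+p,i}, i ∈ ℤ) with US = TU, then for every i ∈ ℤ the operators |S_i| and |T_{i+p}| are unitarily equivalent; in particular σ(|S_i|) = σ(|T_{i+p}|) for all i ∈ ℤ. -/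
/-!
A unitary `U` of diagonal form with `US = TU` splits into unitary blocks `V j : H → H`, namely
the entries `U_{j+p,j}`. Comparing the `(i+p, i-1)` entries of `US = TU` gives
`V i * S_i = T_{i+p} * V (i-1)`. Since `V i` is an isometry and `V (i-1)` is unitary,
`|S_i| = |V i * S_i| = |T_{i+p} * V (i-1)| = V (i-1)* |T_{i+p}| V (i-1)`.
-/

/-- The modulus `|A| = (A*A)^{1/2}` of a bounded operator on a Hilbert space. -/
noncomputable def opAbs {E : Type*} [NormedAddCommGroup E] [InnerProductSpace ℂ E]
    [CompleteSpace E] (A : E →L[ℂ] E) : E →L[ℂ] E :=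
  CFC.sqrt (ContinuousLinearMap.adjoint A * A)

open scoped ENNReal

namespace CFC

variable {A : Type*} [CStarAlgebra A] [PartialOrder A] [StarOrderedRing A]

lemma sqrt_star_left_conjugate {a u : A} (ha : 0 ≤ a) (hu : u * star u = 1) :
    sqrt (star u * a * u) = star u * sqrt a * u := by
  refine sqrt_unique ?_ (star_left_conjugate_nonneg (sqrt_nonneg a) u)
  calc star u * sqrt a * u * (star u * sqrt a * u)
      = star u * (sqrt a * (u * star u) * sqrt a) * u := by noncomm_ring
    _ = star u * a * u := by rw [hu, mul_one, sqrt_mul_sqrt_self a ha]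

lemma abs_mul_of_mul_star_self {u : A} (hu : u * star u = 1) (a : A) :
    abs (a * u) = star u * abs a * u := by
  rw [abs, abs, star_mul, ← mul_assoc, mul_assoc (star u),
    sqrt_star_left_conjugate (star_mul_self_nonneg a) hu]

lemma abs_mul_of_star_mul_self {v : A} (hv : star v * v = 1) (a : A) :
    abs (v * a) = abs a := by
  rw [abs, abs, star_mul, mul_assoc, ← mul_assoc (star v), hv, one_mul]

lemma abs_eq_star_mul_abs_mul_of_mul_eq {a b u v : A} (hv : star v * v = 1)
    (hu : u * star u = 1) (h : v * a = b * u) :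
    abs a = star u * abs b * u := by
  rw [← abs_mul_of_star_mul_self hv a, h, abs_mul_of_mul_star_self hu]

end CFC

lemma opAbs_eq_abs {E : Type*} [NormedAddCommGroup E] [InnerProductSpace ℂ E]
    [CompleteSpace E] (A : E →L[ℂ] E) : opAbs A = CFC.abs A :=
  rfl

namespace lp

section Entry

variable {ι 𝕜 E : Type*} [DecidableEq ι] [NormedField 𝕜] [NormedAddCommGroup E]
  [NormedSpace 𝕜 E] {r : ℝ≥0∞} [Fact (1 ≤ r)]

noncomputable def entry (A : lp (fun _ : ι => E) r →L[𝕜] lp (fun _ : ι => E) r) (i j : ι) :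
    E →L[𝕜] E :=
  evalCLM 𝕜 (fun _ : ι => E) r i ∘L A ∘L singleContinuousLinearMap 𝕜 (fun _ : ι => E) r j

lemma entry_apply (A : lp (fun _ : ι => E) r →L[𝕜] lp (fun _ : ι => E) r) (i j : ι) (x : E) :
    entry A i j x = A (lp.single r j x) i :=
  rfl

lemma entry_one_self (i : ι) :
    entry (1 : lp (fun _ : ι => E) r →L[𝕜] lp (fun _ : ι => E) r) i i = 1 := by
  ext x
  simp [entry_apply]

variable [AddGroup ι]

/-- `A = F^p D` in the paper's notation. -/
def IsDiagonalForm (A : lp (fun _ : ι => E) r →L[𝕜] lp (fun _ : ι => E) r) (p : ι) : Prop :=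
  ∀ i j : ι, i ≠ j + p → ∀ x : E, A (lp.single r j x) i = 0

namespace IsDiagonalForm

variable {A B : lp (fun _ : ι => E) r →L[𝕜] lp (fun _ : ι => E) r} {p q : ι}

lemma entry_eq_zero (hA : IsDiagonalForm A p) {i j : ι} (hij : i ≠ j + p) : entry A i j = 0 := by
  ext x
  exact hA i j hij x

lemma apply_single (hA : IsDiagonalForm A p) (j : ι) (x : E) :
    A (lp.single r j x) = lp.single r (j + p) (entry A (j + p) j x) := by
  ext k
  rcases eq_or_ne k (j + p) with rfl | hk
  · rw [lp.single_apply_self, entry_apply]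
  · rw [lp.single_apply_ne _ _ _ hk, hA k j hk]

lemma entry_mul (hB : IsDiagonalForm B q) {i j k : ι} (hk : k = j + q) :
    entry (A * B) i j = entry A i k * entry B k j := by
  subst hk
  ext x
  rw [entry_apply, mul_apply_eq_comp, hB.apply_single, mul_apply_eq_comp]
  rfl

end IsDiagonalForm

end Entry

section Hilbert

variable {ι 𝕜 E : Type*} [DecidableEq ι] [RCLike 𝕜] [NormedAddCommGroup E]
  [InnerProductSpace 𝕜 E] [CompleteSpace E]

lemma adjoint_entry (A : lp (fun _ : ι => E) 2 →L[𝕜] lp (fun _ : ι => E) 2) (i j : ι) :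
    ContinuousLinearMap.adjoint (entry A i j) = entry (ContinuousLinearMap.adjoint A) j i := by
  refine ((ContinuousLinearMap.eq_adjoint_iff _ _).mpr fun x y => ?_).symm
  rw [entry_apply, entry_apply, ← lp.inner_single_right, ContinuousLinearMap.adjoint_inner_left,
    lp.inner_single_left]

namespace IsDiagonalForm

variable [AddGroup ι] {U : lp (fun _ : ι => E) 2 →L[𝕜] lp (fun _ : ι => E) 2} {p : ι}

lemma adjoint (hU : IsDiagonalForm U p) : IsDiagonalForm (ContinuousLinearMap.adjoint U) (-p) := by
  intro i j hij x
  have hji : j ≠ i + p := fun h => hij (eq_add_neg_of_add_eq h.symm)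
  rw [← entry_apply, ← adjoint_entry, hU.entry_eq_zero hji, map_zero,
    zero_apply]

lemma entry_mem_unitary (hU : IsDiagonalForm U p) (hUu : U ∈ unitary _) (j : ι) :
    entry U (j + p) j ∈ unitary (E →L[𝕜] E) := by
  rw [Unitary.mem_iff, ContinuousLinearMap.star_eq_adjoint, adjoint_entry]
  constructor
  · rw [← hU.entry_mul rfl, ← ContinuousLinearMap.star_eq_adjoint,
      Unitary.star_mul_self_of_mem hUu, entry_one_self]
  · rw [← hU.adjoint.entry_mul (add_neg_cancel_right j p).symm,
      ← ContinuousLinearMap.star_eq_adjoint, Unitary.mul_star_self_of_mem hUu, entry_one_self]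

end IsDiagonalForm

end Hilbert

variable {𝕜 E : Type*} [NormedField 𝕜] [NormedAddCommGroup E] [NormedSpace 𝕜 E]
  {r : ℝ≥0∞} [Fact (1 ≤ r)]

def IsWeightedShift (S : lp (fun _ : ℤ => E) r →L[𝕜] lp (fun _ : ℤ => E) r)
    (w : ℤ → E →L[𝕜] E) : Prop :=
  ∀ (x : lp (fun _ : ℤ => E) r) (i : ℤ), S x i = w i (x (i - 1))

namespace IsWeightedShift

variable {S : lp (fun _ : ℤ => E) r →L[𝕜] lp (fun _ : ℤ => E) r} {w : ℤ → E →L[𝕜] E}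

lemma isDiagonalForm (hS : IsWeightedShift S w) : IsDiagonalForm S 1 := by
  intro i j hij x
  rw [hS, lp.single_apply_ne _ _ _ (by omega), map_zero]

lemma entry_eq (hS : IsWeightedShift S w) {i j : ℤ} (hij : i = j + 1) : entry S i j = w i := by
  ext x
  rw [entry_apply, hS, show i - 1 = j by omega, lp.single_apply_self]

end IsWeightedShift

end lp

theorem diagonal_unitary_intertwiner_moduli_unitarily_equivalent_general {H : Type*}
    [NormedAddCommGroup H] [InnerProductSpace ℂ H] [CompleteSpace H]
    (sw tw : ℤ → H →L[ℂ] H)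
    (S T U : lp (fun _ : ℤ => H) 2 →L[ℂ] lp (fun _ : ℤ => H) 2)
    (hS : ∀ (x : lp (fun _ : ℤ => H) 2) (i : ℤ), S x i = sw i (x (i - 1)))
    (hT : ∀ (x : lp (fun _ : ℤ => H) 2) (i : ℤ), T x i = tw i (x (i - 1)))
    (hU : ContinuousLinearMap.adjoint U * U = 1 ∧ U * ContinuousLinearMap.adjoint U = 1)
    (p : ℤ)
    (hdiag : ∀ (i j : ℤ), i ≠ j + p → ∀ x : H, (U (lp.single 2 j x)) i = 0)
    (hUS : U * S = T * U) :
    ∀ i : ℤ,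
      (∃ W : H →L[ℂ] H,
        (ContinuousLinearMap.adjoint W * W = 1 ∧ W * ContinuousLinearMap.adjoint W = 1) ∧
          W * opAbs (sw i) = opAbs (tw (i + p)) * W) ∧
      spectrum ℂ (opAbs (sw i)) = spectrum ℂ (opAbs (tw (i + p))) := by
  intro i
  have hUu : U ∈ unitary _ := Unitary.mem_iff.mpr hU
  have hS : lp.IsWeightedShift S sw := hS
  have hT : lp.IsWeightedShift T tw := hT
  have hdiag : lp.IsDiagonalForm U p := hdiag
  set W := lp.entry U (i - 1 + p) (i - 1)
  have hW : W ∈ unitary _ := hdiag.entry_mem_unitary hUu (i - 1)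
  have hV := hdiag.entry_mem_unitary hUu i
  have hint : lp.entry U (i + p) i * sw i = tw (i + p) * W := by
    have h := congrArg (fun X => lp.entry X (i + p) (i - 1)) hUS
    rwa [hS.isDiagonalForm.entry_mul (sub_add_cancel i 1).symm, hdiag.entry_mul rfl,
      hS.entry_eq (sub_add_cancel i 1).symm, hT.entry_eq (by ring)] at h
  have habs : opAbs (sw i) = star W * opAbs (tw (i + p)) * W := by
    rw [opAbs_eq_abs, opAbs_eq_abs]
    exact CFC.abs_eq_star_mul_abs_mul_of_mul_eq (Unitary.star_mul_self_of_mem hV)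
      (Unitary.mul_star_self_of_mem hW) hint
  refine ⟨⟨W, Unitary.mem_iff.mp hW, ?_⟩, ?_⟩
  · rw [habs, ← mul_assoc, ← mul_assoc, Unitary.mul_star_self_of_mem hW, one_mul]
  · rw [habs]
    exact Unitary.spectrum_star_left_conjugate (U := ⟨W, hW⟩)

/-- If two bilateral weighted shifts with quasi-invertible uniformly bounded
weights are intertwined by a unitary `U` of diagonal form (the only possibly
nonzero matrix entries of `U` are `U_{i+p,i}`), then `|S_i|` and `|T_{i+p}|` are
unitarily equivalent for all `i`; in particular their spectra coincide. -/
theorem diagonal_unitary_intertwiner_moduli_unitarily_equivalent {H : Type*}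
    [NormedAddCommGroup H] [InnerProductSpace ℂ H] [CompleteSpace H]
    (sw tw : ℤ → H →L[ℂ] H)
    (hsbdd : ∃ C : ℝ, ∀ i : ℤ, ‖sw i‖ ≤ C) (htbdd : ∃ C : ℝ, ∀ i : ℤ, ‖tw i‖ ≤ C)
    (hsqi : ∀ i : ℤ, LinearMap.ker (sw i : H →ₗ[ℂ] H) = ⊥ ∧
      LinearMap.ker (ContinuousLinearMap.adjoint (sw i) : H →ₗ[ℂ] H) = ⊥)
    (htqi : ∀ i : ℤ, LinearMap.ker (tw i : H →ₗ[ℂ] H) = ⊥ ∧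
      LinearMap.ker (ContinuousLinearMap.adjoint (tw i) : H →ₗ[ℂ] H) = ⊥)
    (S T U : lp (fun _ : ℤ => H) 2 →L[ℂ] lp (fun _ : ℤ => H) 2)
    (hS : ∀ (x : lp (fun _ : ℤ => H) 2) (i : ℤ), S x i = sw i (x (i - 1)))
    (hT : ∀ (x : lp (fun _ : ℤ => H) 2) (i : ℤ), T x i = tw i (x (i - 1)))
    (hU : ContinuousLinearMap.adjoint U * U = 1 ∧ U * ContinuousLinearMap.adjoint U = 1)
    (p : ℤ)
    (hdiag : ∀ (i j : ℤ), i ≠ j + p → ∀ x : H, (U (lp.single 2 j x)) i = 0)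
    (hUS : U * S = T * U) :
    ∀ i : ℤ,
      (∃ W : H →L[ℂ] H,
        (ContinuousLinearMap.adjoint W * W = 1 ∧ W * ContinuousLinearMap.adjoint W = 1) ∧
          W * opAbs (sw i) = opAbs (tw (i + p)) * W) ∧
      spectrum ℂ (opAbs (sw i)) = spectrum ℂ (opAbs (tw (i + p))) :=
  diagonal_unitary_intertwiner_moduli_unitarily_equivalent_general sw tw S T U hS hT hU p hdiag hUS
end

section
/- Let H = ℂᵏ with k ≥ 2 and for each n ∈ ℤ let (x_{n,i})_{i=1}^k be positive reals, pairwise distinct across all pairs (n,i), with sup_{n,i} x_{n,i} < ∞. Let S_n = diag(x_{n,1},…,x_{n,k}) and T_n = diag(x_{n-1,1}, x_{n-2,2},…, x_{n-k,k}). Then the bilateral weighted shifts S, T with weights (S_n), (T_n) are unitarily equivalent, but every unitary U ∈ B(ℓ²(ℤ, ℂᵏ)) with US = TU has at least k non-zero diagonals (i.e., there exist at least k distinct values d ∈ ℤ for which some matrix entry U_{i+d,i} is non-zero). -/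
/-!
The unitary `y ↦ (n ↦ (y (n - i - 1) i)ᵢ)`, which shifts the `i`-th coordinate by `i + 1`
places, intertwines `S` and `T`. Conversely, a unitary `U` with `U S = T U` also intertwines
`S S*` and `T T*`, which are diagonal in the standard basis `e n i` with entries `x n i ^ 2` and
`x (n - i - 1) i ^ 2`. So `U (e 0 i)` is a nonzero eigenvector of `T T*` for `x 0 i ^ 2`, and since
the weights are distinct and positive, this forces `U (e 0 i)` to have a nonzero entry at
`e (i + 1) i`, that is, on the diagonal `d = i + 1`.
-/

open ContinuousLinearMap
open scoped InnerProductSpace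

section L2

variable {α : Type*} {E : α → Type*} [∀ a, NormedAddCommGroup (E a)]

theorem memℓp_two_iff {f : ∀ a, E a} : Memℓp f 2 ↔ Summable fun a => ‖f a‖ ^ 2 := by
  simpa using memℓp_gen_iff (p := 2) (f := f) (by norm_num)

theorem lp.hasSum_norm_sq (f : lp E 2) : HasSum (fun a => ‖f a‖ ^ 2) (‖f‖ ^ 2) := by
  simpa using lp.hasSum_norm (p := 2) (by norm_num) f

end L2

noncomputable section CoordReindex

variable {𝕜 α ι : Type*} [RCLike 𝕜] [Fintype ι] (e : ι → α ≃ α)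
  (y : lp (fun _ : α => EuclideanSpace 𝕜 ι) 2)

theorem hasSum_norm_sq_reindex_coords : HasSum (fun a => ∑ i, ‖y (e i a) i‖ ^ 2) (‖y‖ ^ 2) := by
  have hy : HasSum (fun a => ∑ i, ‖y a i‖ ^ 2) (‖y‖ ^ 2) := by
    simpa only [EuclideanSpace.norm_sq_eq] using lp.hasSum_norm_sq y
  have hcoord (i : ι) : Summable fun a => ‖y a i‖ ^ 2 :=
    hy.summable.of_nonneg_of_le (fun _ => by positivity) fun a =>
      Finset.single_le_sum (f := fun j => ‖y a j‖ ^ 2) (fun _ _ => by positivity)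
        (Finset.mem_univ i)
  have h := hasSum_sum (s := Finset.univ) fun i _ => (e i).hasSum_iff.2 (hcoord i).hasSum
  rwa [← Summable.tsum_finsetSum fun i _ => hcoord i, hy.tsum_eq] at h

def reindexCoordsₗ :
    lp (fun _ : α => EuclideanSpace 𝕜 ι) 2 →ₗ[𝕜] lp (fun _ : α => EuclideanSpace 𝕜 ι) 2 where
  toFun y := ⟨fun a => WithLp.toLp 2 fun i => y (e i a) i, memℓp_two_iff.2 <| by
    simpa only [EuclideanSpace.norm_sq_eq] using (hasSum_norm_sq_reindex_coords e y).summable⟩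
  map_add' _ _ := rfl
  map_smul' _ _ := rfl

@[simp]
theorem reindexCoordsₗ_apply (a : α) (i : ι) : reindexCoordsₗ e y a i = y (e i a) i := rfl

theorem norm_reindexCoordsₗ : ‖reindexCoordsₗ e y‖ = ‖y‖ := by
  have h := lp.hasSum_norm_sq (reindexCoordsₗ e y)
  simp only [EuclideanSpace.norm_sq_eq, reindexCoordsₗ_apply] at h
  exact (pow_left_inj₀ (norm_nonneg _) (norm_nonneg _) two_ne_zero).1
    (h.unique (hasSum_norm_sq_reindex_coords e y))

def reindexCoords :
    lp (fun _ : α => EuclideanSpace 𝕜 ι) 2 ≃ₗᵢ[𝕜] lp (fun _ : α => EuclideanSpace 𝕜 ι) 2 where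
  toLinearEquiv := .ofLinearMap (reindexCoordsₗ e) (reindexCoordsₗ fun i => (e i).symm)
    (LinearMap.ext fun y => lp.ext <| funext fun a => PiLp.ext fun i => by simp)
    (LinearMap.ext fun y => lp.ext <| funext fun a => PiLp.ext fun i => by simp)
  norm_map' := norm_reindexCoordsₗ e

@[simp]
theorem reindexCoords_apply (a : α) (i : ι) : reindexCoords e y a i = y (e i a) i := rfl

end CoordReindex

theorem Unitary.intertwines_mul_star_self {R : Type*} [Monoid R] [StarMul R] {U S T : R}
    (hU : U ∈ unitary R) (h : U * S = T * U) : U * (S * star S) = T * star T * U := by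
  have hT : T = U * S * star U := by rw [h, mul_assoc, Unitary.mul_star_self_of_mem hU, mul_one]
  have hcancel (x : R) : star U * (U * x) = x := by
    rw [← mul_assoc, Unitary.star_mul_self_of_mem hU, one_mul]
  simp only [hT, star_mul, star_star, mul_assoc, hcancel, Unitary.star_mul_self_of_mem hU, mul_one]

section WeightedShift

variable {𝕜 E : Type*} [RCLike 𝕜] [NormedAddCommGroup E] [InnerProductSpace 𝕜 E]
  {S : lp (fun _ : ℤ => E) 2 →L[𝕜] lp (fun _ : ℤ => E) 2} {w : ℤ → E →L[𝕜] E}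

theorem weightedShift_single (hS : ∀ y n, S y n = w n (y (n - 1))) (n : ℤ) (v : E) :
    S (lp.single 2 n v) = lp.single 2 (n + 1) (w (n + 1) v) := by
  refine lp.ext <| funext fun m => ?_
  rw [hS]
  by_cases hm : m = n + 1
  · subst hm
    simp
  · rw [lp.single_apply_ne _ _ _ (by omega), lp.single_apply_ne _ _ _ hm, map_zero]

theorem adjoint_weightedShift_apply [CompleteSpace E] (hS : ∀ y n, S y n = w n (y (n - 1)))
    (f : lp (fun _ : ℤ => E) 2) (n : ℤ) : adjoint S f n = adjoint (w (n + 1)) (f (n + 1)) :=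
  ext_inner_left 𝕜 fun v => calc
    ⟪v, adjoint S f n⟫_𝕜 = ⟪lp.single 2 n v, adjoint S f⟫_𝕜 := by
      rw [lp.inner_single_left]
    _ = ⟪w (n + 1) v, f (n + 1)⟫_𝕜 := by
      rw [adjoint_inner_right, weightedShift_single hS, lp.inner_single_left]
    _ = ⟪v, adjoint (w (n + 1)) (f (n + 1))⟫_𝕜 := (adjoint_inner_right _ _ _).symm

theorem weightedShift_mul_adjoint_apply [CompleteSpace E] (hS : ∀ y n, S y n = w n (y (n - 1)))
    (f : lp (fun _ : ℤ => E) 2) (n : ℤ) :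
    (S * adjoint S) f n = w n (adjoint (w n) (f n)) := by
  rw [mul_apply_eq_comp, hS, adjoint_weightedShift_apply hS, sub_add_cancel]

end WeightedShift

section Diagonal

variable {𝕜 ι : Type*} [RCLike 𝕜] [Fintype ι]

theorem EuclideanSpace.adjoint_apply_of_diagonal {A : EuclideanSpace 𝕜 ι →L[𝕜] EuclideanSpace 𝕜 ι}
    {c : ι → 𝕜} (hA : ∀ v i, A v i = c i * v i) (v : EuclideanSpace 𝕜 ι) (i : ι) :
    adjoint A v i = starRingEnd 𝕜 (c i) * v i := by
  classical
  have hsingle : A (EuclideanSpace.single i 1) = EuclideanSpace.single i (c i) := by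
    ext j
    by_cases hj : j = i <;> simp [hA, hj]
  have hcoord (u : EuclideanSpace 𝕜 ι) : u i = ⟪EuclideanSpace.single i 1, u⟫_𝕜 := by
    simp [EuclideanSpace.inner_single_left]
  rw [hcoord, adjoint_inner_right, hsingle, EuclideanSpace.inner_single_left]

theorem EuclideanSpace.apply_adjoint_apply_of_real_diagonal
    {A : EuclideanSpace 𝕜 ι →L[𝕜] EuclideanSpace 𝕜 ι} {c : ι → ℝ}
    (hA : ∀ v i, A v i = c i * v i) (v : EuclideanSpace 𝕜 ι) (i : ι) :
    A (adjoint A v) i = (c i : 𝕜) ^ 2 * v i := by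
  rw [hA, adjoint_apply_of_diagonal hA, RCLike.conj_ofReal, ← mul_assoc, sq]

variable {α : Type*}
  {U D D₁ :
    lp (fun _ : α => EuclideanSpace 𝕜 ι) 2 →L[𝕜] lp (fun _ : α => EuclideanSpace 𝕜 ι) 2}
  {c : α → ι → 𝕜} {f : lp (fun _ : α => EuclideanSpace 𝕜 ι) 2} {μ : 𝕜}

theorem apply_single_single_of_diagonal [DecidableEq α] [DecidableEq ι]
    (hD : ∀ y a i, D y a i = c a i * y a i) (a : α) (i : ι) :
    D (lp.single 2 a (EuclideanSpace.single i 1)) =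
      c a i • (lp.single 2 a (EuclideanSpace.single i 1) :
        lp (fun _ : α => EuclideanSpace 𝕜 ι) 2) := by
  refine lp.ext <| funext fun b => PiLp.ext fun j => ?_
  by_cases hb : b = a
  · subst hb
    by_cases hj : j = i <;> simp [hD, hj]
  · simp [hD, hb]

theorem apply_eigenvector_eq_zero_of_intertwines (hD : ∀ y a i, D y a i = c a i * y a i)
    (hU : U * D₁ = D * U) (hf : D₁ f = μ • f) {b : α} {j : ι} (hc : c b j ≠ μ) :
    U f b j = 0 := by
  have hcoord : c b j * U f b j = μ * U f b j := by
    rw [← hD, ← mul_apply_eq_comp, ← hU, mul_apply_eq_comp, hf, map_smul]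
    rfl
  refine (mul_eq_zero.1 ?_).resolve_left (sub_ne_zero.2 hc)
  rw [sub_mul, hcoord, sub_self]

theorem exists_apply_eigenvector_ne_zero_of_intertwines (hD : ∀ y a i, D y a i = c a i * y a i)
    (hU : U * D₁ = D * U) (hinj : Function.Injective U) (hf : D₁ f = μ • f)
    (hf₀ : f ≠ 0) : ∃ b j, U f b j ≠ 0 ∧ c b j = μ := by
  by_contra! hzero
  refine hf₀ (hinj ((lp.ext <| funext fun b => PiLp.ext fun j => ?_).trans (map_zero U).symm))
  by_contra hne
  exact hne (apply_eigenvector_eq_zero_of_intertwines hD hU hf (hzero b j hne))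

end Diagonal

theorem bilateral_shift_example_k_nonzero_diagonals_general (k : ℕ)
    (x : ℤ → Fin k → ℝ)
    (hxpos : ∀ n i, 0 < x n i)
    (hxinj : ∀ n i m j, x n i = x m j → n = m ∧ i = j)
    (sw tw : ℤ → EuclideanSpace ℂ (Fin k) →L[ℂ] EuclideanSpace ℂ (Fin k))
    (hsw : ∀ (n : ℤ) (v : EuclideanSpace ℂ (Fin k)) (i : Fin k),
      sw n v i = (x n i : ℂ) * v i)
    (htw : ∀ (n : ℤ) (v : EuclideanSpace ℂ (Fin k)) (i : Fin k),
      tw n v i = (x (n - (i + 1 : ℕ)) i : ℂ) * v i)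
    (S T : lp (fun _ : ℤ => EuclideanSpace ℂ (Fin k)) 2 →L[ℂ]
      lp (fun _ : ℤ => EuclideanSpace ℂ (Fin k)) 2)
    (hS : ∀ (y : lp (fun _ : ℤ => EuclideanSpace ℂ (Fin k)) 2) (i : ℤ),
      S y i = sw i (y (i - 1)))
    (hT : ∀ (y : lp (fun _ : ℤ => EuclideanSpace ℂ (Fin k)) 2) (i : ℤ),
      T y i = tw i (y (i - 1))) :
    (∃ U : lp (fun _ : ℤ => EuclideanSpace ℂ (Fin k)) 2 →L[ℂ]
        lp (fun _ : ℤ => EuclideanSpace ℂ (Fin k)) 2,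
      (ContinuousLinearMap.adjoint U * U = 1 ∧ U * ContinuousLinearMap.adjoint U = 1) ∧
        U * S = T * U) ∧
    ∀ U : lp (fun _ : ℤ => EuclideanSpace ℂ (Fin k)) 2 →L[ℂ]
        lp (fun _ : ℤ => EuclideanSpace ℂ (Fin k)) 2,
      (ContinuousLinearMap.adjoint U * U = 1 ∧ U * ContinuousLinearMap.adjoint U = 1) →
      U * S = T * U →
      ∃ ds : Finset ℤ, k ≤ ds.card ∧
        ∀ d ∈ ds, ∃ (i : ℤ) (v : EuclideanSpace ℂ (Fin k)),
          (U (lp.single 2 i v)) (i + d) ≠ 0 := by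
  set U₀ := reindexCoords (𝕜 := ℂ) fun i : Fin k => Equiv.subRight (((i : ℕ) + 1 : ℕ) : ℤ)
  refine ⟨⟨U₀, (Unitary.linearIsometryEquiv.symm U₀).prop, ?_⟩, fun U hU hUS => ?_⟩
  · ext y n i
    simp [U₀, hS, hT, hsw, htw, sub_right_comm]
  have hSS y n i : (S * adjoint S) y n i = (x n i : ℂ) ^ 2 * y n i := by
    rw [weightedShift_mul_adjoint_apply hS]
    exact EuclideanSpace.apply_adjoint_apply_of_real_diagonal (hsw n) (y n) i
  have hTT y n i : (T * adjoint T) y n i = (x (n - ((i : ℕ) + 1 : ℕ)) i : ℂ) ^ 2 * y n i := by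
    rw [weightedShift_mul_adjoint_apply hT]
    exact EuclideanSpace.apply_adjoint_apply_of_real_diagonal (htw n) (y n) i
  have hUD : U * (S * adjoint S) = T * adjoint T * U := Unitary.intertwines_mul_star_self hU hUS
  have hinj : Function.Injective U := (Unitary.linearIsometryEquiv ⟨U, hU⟩).injective
  refine ⟨Finset.univ.image fun i : Fin k => (i : ℤ) + 1, ?_, fun d hd => ?_⟩
  · rw [Finset.card_image_of_injective _ fun i j h => by simpa [Fin.ext_iff] using h,
      Finset.card_univ, Fintype.card_fin]
  obtain ⟨i, -, rfl⟩ := Finset.mem_image.1 hd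
  obtain ⟨m, j, hne, heq⟩ := exists_apply_eigenvector_ne_zero_of_intertwines hTT hUD hinj
    (apply_single_single_of_diagonal hSS 0 i)
    (ne_of_apply_ne (fun y => y 0 i) (by simp))
  obtain ⟨hm, rfl⟩ := hxinj _ _ _ _ <|
    (pow_left_inj₀ (hxpos _ _).le (hxpos _ _).le two_ne_zero).1 (by exact_mod_cast heq)
  refine ⟨0, EuclideanSpace.single j 1, ?_⟩
  rw [zero_add, show ((j : ℕ) : ℤ) + 1 = m by omega]
  exact ne_of_apply_ne (· j) hne

/-- For `k ≥ 2`, take positive reals `x n i` (`n ∈ ℤ`, `i ∈ Fin k`), pairwise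
distinct and uniformly bounded. Let `S_n = diag (x n 0, …, x n (k-1))` and
`T_n = diag (x (n-1) 0, x (n-2) 1, …, x (n-k) (k-1))`. Then the bilateral
weighted shifts `S`, `T` with these weights are unitarily equivalent, but every
unitary `U` with `US = TU` has at least `k` non-zero diagonals: there are at
least `k` distinct `d ∈ ℤ` such that some matrix entry `U_{i+d,i}` is nonzero. -/
theorem bilateral_shift_example_k_nonzero_diagonals (k : ℕ) (hk : 2 ≤ k)
    (x : ℤ → Fin k → ℝ)
    (hxpos : ∀ n i, 0 < x n i)
    (hxinj : ∀ n i m j, x n i = x m j → n = m ∧ i = j)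
    (hxbdd : ∃ C : ℝ, ∀ n i, x n i ≤ C)
    (sw tw : ℤ → EuclideanSpace ℂ (Fin k) →L[ℂ] EuclideanSpace ℂ (Fin k))
    (hsw : ∀ (n : ℤ) (v : EuclideanSpace ℂ (Fin k)) (i : Fin k),
      sw n v i = (x n i : ℂ) * v i)
    (htw : ∀ (n : ℤ) (v : EuclideanSpace ℂ (Fin k)) (i : Fin k),
      tw n v i = (x (n - (i + 1 : ℕ)) i : ℂ) * v i)
    (S T : lp (fun _ : ℤ => EuclideanSpace ℂ (Fin k)) 2 →L[ℂ]
      lp (fun _ : ℤ => EuclideanSpace ℂ (Fin k)) 2)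
    (hS : ∀ (y : lp (fun _ : ℤ => EuclideanSpace ℂ (Fin k)) 2) (i : ℤ),
      S y i = sw i (y (i - 1)))
    (hT : ∀ (y : lp (fun _ : ℤ => EuclideanSpace ℂ (Fin k)) 2) (i : ℤ),
      T y i = tw i (y (i - 1))) :
    (∃ U : lp (fun _ : ℤ => EuclideanSpace ℂ (Fin k)) 2 →L[ℂ]
        lp (fun _ : ℤ => EuclideanSpace ℂ (Fin k)) 2,
      (ContinuousLinearMap.adjoint U * U = 1 ∧ U * ContinuousLinearMap.adjoint U = 1) ∧
        U * S = T * U) ∧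
    ∀ U : lp (fun _ : ℤ => EuclideanSpace ℂ (Fin k)) 2 →L[ℂ]
        lp (fun _ : ℤ => EuclideanSpace ℂ (Fin k)) 2,
      (ContinuousLinearMap.adjoint U * U = 1 ∧ U * ContinuousLinearMap.adjoint U = 1) →
      U * S = T * U →
      ∃ ds : Finset ℤ, k ≤ ds.card ∧
        ∀ d ∈ ds, ∃ (i : ℤ) (v : EuclideanSpace ℂ (Fin k)),
          (U (lp.single 2 i v)) (i + d) ≠ 0 :=
  bilateral_shift_example_k_nonzero_diagonals_general k x hxpos hxinj sw tw hsw htw S T hS hT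
end
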